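/- Assume 0 ≤ g(T) ≤ M for all T ⊆ B. Let X, Y ⊆ V be such that X_A = R and R ⊊ Y_A. Then F(X) + F(Y) ≥ F(X ∪ Y) + F(X ∩ Y). -/

import Mathlib

open Finset

variable {α : Type*}

/-- The function `f_{A,R}`: 0 on `R`, 1 on strict subsets/supersets of `R`, 2 otherwise. -/
noncomputable def fAR [DecidableEq α] (R T : Finset α) : ℝ :=
  if T = R then 0 else if T ⊂ R ∨ R ⊂ T then 1 else 2

/-- The submodularizer `φ` on subsets of `V`, where `B = V \ A`:
`φ(S) = |S ∩ B|` if `S ∩ A ⊊ R`, `-|S ∩ B|` if `S ∩ A ⊋ R`, and `0` otherwise. -/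
noncomputable def phi [DecidableEq α] (A R B S : Finset α) : ℝ :=
  if S ∩ A ⊂ R then ((S ∩ B).card : ℝ)
  else if R ⊂ S ∩ A then -((S ∩ B).card : ℝ)
  else 0

/-- The main building block
`F(S) = f_{A,R}(S ∩ A) + (1/(2n)) φ(S) + (1/(4Mn)) ⋅ 1[S ∩ A = R] ⋅ g(S ∩ B)`. -/
noncomputable def Fbb [DecidableEq α] (n : ℕ) (A R B : Finset α) (M : ℝ)
    (g : Finset α → ℝ) (S : Finset α) : ℝ :=
  fAR R (S ∩ A) + (1 / (2 * (n : ℝ))) * phi A R B S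
    + (1 / (4 * M * (n : ℝ))) * (if S ∩ A = R then (1 : ℝ) else 0) * g (S ∩ B)

/-!
On `X` and `X ∩ Y` the `A`-part equals `R`, so `F` is just the small term `g(S_B)/(4Mn)`; on `Y`
and `X ∪ Y` the `A`-part strictly contains `R`, so `F = 1 - |S_B|/(2n)`. If `X_B ⊆ Y` then
`(X ∩ Y)_B = X_B` and the inequality reduces to `|Y_B| ≤ |(X ∪ Y)_B|`. Otherwise `X ∪ Y` has a
`B`-element more than `Y`, which gains `1/(2n)` on the right, while `0 ≤ g ≤ M` keeps the
`g`-terms within `1/(4n)` of each other.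
-/

theorem fAR_self [DecidableEq α] (R : Finset α) : fAR R R = 0 := if_pos rfl

theorem fAR_of_ssuperset [DecidableEq α] {R T : Finset α} (h : R ⊂ T) : fAR R T = 1 := by
  rw [fAR, if_neg h.ne', if_pos (Or.inr h)]

theorem phi_of_inter_eq [DecidableEq α] {A R B S : Finset α} (h : S ∩ A = R) :
    phi A R B S = 0 := by
  simp only [phi, h, ssubset_irrefl, if_false]

theorem phi_of_ssuperset [DecidableEq α] {A R B S : Finset α} (h : R ⊂ S ∩ A) :
    phi A R B S = -(#(S ∩ B) : ℝ) := by
  rw [phi, if_neg (asymm h), if_pos h]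

theorem Fbb_of_inter_eq [DecidableEq α] {n : ℕ} {A R B : Finset α} {M : ℝ} {g : Finset α → ℝ}
    {S : Finset α} (h : S ∩ A = R) :
    Fbb n A R B M g S = 1 / (4 * M * n) * g (S ∩ B) := by
  rw [Fbb, h, fAR_self, phi_of_inter_eq h, if_pos rfl]
  ring

theorem Fbb_of_ssuperset [DecidableEq α] {n : ℕ} {A R B : Finset α} {M : ℝ} {g : Finset α → ℝ}
    {S : Finset α} (h : R ⊂ S ∩ A) :
    Fbb n A R B M g S = 1 - 1 / (2 * n) * #(S ∩ B) := by
  rw [Fbb, fAR_of_ssuperset h, phi_of_ssuperset h, if_neg h.ne']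
  ring

theorem inter_inter_eq_or_card_lt_card_union_inter [DecidableEq α] (X Y B : Finset α) :
    X ∩ Y ∩ B = X ∩ B ∨ #(Y ∩ B) < #((X ∪ Y) ∩ B) := by
  by_cases h : X ∩ B ⊆ Y
  · exact .inl (by rw [inter_right_comm, inter_eq_left.mpr h])
  · right
    refine card_lt_card ⟨inter_subset_inter_right subset_union_right, fun hsub => h ?_⟩
    intro x hx
    exact (mem_inter.mp (hsub (inter_subset_inter_right subset_union_left hx))).1

theorem scaled_le_quarter_of_le {M n t : ℝ} (hM : 0 < M) (hn : 0 < n) (ht : t ≤ M) :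
    1 / (4 * M * n) * t ≤ 1 / (4 * n) :=
  calc 1 / (4 * M * n) * t ≤ 1 / (4 * M * n) * M := by gcongr
    _ = 1 / (4 * n) := by field_simp

theorem Fbb_case26_general [DecidableEq α] (V A R : Finset α) (hV : 1 ≤ V.card)
    (M : ℝ) (hM : 0 < M) (g : Finset α → ℝ)
    (hg : ∀ T ⊆ V \ A, 0 ≤ g T ∧ g T ≤ M)
    (X Y : Finset α)
    (hXA : X ∩ A = R) (hYA : R ⊂ Y ∩ A) :
    Fbb V.card A R (V \ A) M g (X ∪ Y) + Fbb V.card A R (V \ A) M g (X ∩ Y)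
      ≤ Fbb V.card A R (V \ A) M g X + Fbb V.card A R (V \ A) M g Y := by
  set B := V \ A
  set n : ℝ := (V.card : ℝ)
  have hn : 0 < n := by simp only [n]; exact_mod_cast hV
  have hUA : (X ∪ Y) ∩ A = Y ∩ A := by
    rw [union_inter_distrib_right, hXA, union_eq_right.mpr hYA.subset]
  have hIA : X ∩ Y ∩ A = R := by
    rw [inter_inter_distrib_right, hXA, inter_eq_left.mpr hYA.subset]
  rw [Fbb_of_ssuperset (hUA ▸ hYA), Fbb_of_inter_eq hIA, Fbb_of_inter_eq hXA,
    Fbb_of_ssuperset hYA]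
  rcases inter_inter_eq_or_card_lt_card_union_inter X Y B with heq | hlt
  · have hmono : 1 / (2 * n) * (#(Y ∩ B) : ℝ) ≤ 1 / (2 * n) * (#((X ∪ Y) ∩ B) : ℝ) := by
      gcongr; exact subset_union_right
    rw [heq]
    linarith
  · have hstep :
        1 / (2 * n) * (#(Y ∩ B) : ℝ) + 1 / (2 * n) ≤ 1 / (2 * n) * (#((X ∪ Y) ∩ B) : ℝ) := by
      rw [← mul_add_one]; gcongr; exact_mod_cast hlt
    have hquarter : 1 / (4 * n) ≤ 1 / (2 * n) := by gcongr; norm_num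
    have hXYB := scaled_le_quarter_of_le hM hn (hg (X ∩ Y ∩ B) inter_subset_right).2
    have hXB : 0 ≤ 1 / (4 * M * n) * g (X ∩ B) :=
      mul_nonneg (by positivity) (hg (X ∩ B) inter_subset_right).1
    linarith

/-- if 0 ≤ g ≤ M on subsets of B and X ∩ A = R, R ⊊ Y ∩ A, then F(X) + F(Y) ≥ F(X ∪ Y) + F(X ∩ Y). -/
theorem Fbb_case26 [DecidableEq α] (V A R : Finset α) (hV : 1 ≤ V.card)
    (hA : A.Nonempty) (hR : R.Nonempty) (hRA : R ⊆ A) (hAV : A ⊆ V)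
    (M : ℝ) (hM : 0 < M) (g : Finset α → ℝ)
    (hg : ∀ T ⊆ V \ A, 0 ≤ g T ∧ g T ≤ M)
    (X Y : Finset α) (hX : X ⊆ V) (hY : Y ⊆ V)
    (hXA : X ∩ A = R) (hYA : R ⊂ Y ∩ A) :
    Fbb V.card A R (V \ A) M g (X ∪ Y) + Fbb V.card A R (V \ A) M g (X ∩ Y)
      ≤ Fbb V.card A R (V \ A) M g X + Fbb V.card A R (V \ A) M g Y :=
  Fbb_case26_general V A R hV M hM g hg X Y hXA hYA
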